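/- For every ε with 0 < ε < 1/4 and every n ≥ 2, there is an n-player homogeneous delegation game whose worst pure Nash equilibrium has average accuracy 1/2 + 2ε, while some delegation profile achieves average accuracy 1 - (1/2 - 2ε)/n. Consequently, the price of anarchy of delegation games can be made arbitrarily close to 2. -/

import Mathlib

open Classical

/-- Inherited accuracy in a homogeneous delegation game (all proximities equal 1):
the guru's accuracy, or `1/2` if the delegation ends in a cycle. -/
noncomputable def homAcc {n : ℕ} (q : Fin n → ℝ) (d : Fin n → Fin n) (i : Fin n) : ℝ :=
  if h : ∃ k, d (d^[k] i) = d^[k] i then q (d^[Nat.find h] i) else 1/2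

/-- Utility in a homogeneous delegation game with efforts `e`. -/
noncomputable def homUtil {n : ℕ} (q e : Fin n → ℝ) (d : Fin n → Fin n) (i : Fin n) : ℝ :=
  if d i = i then q i - e i else homAcc q d i

/-- Average accuracy of a delegation profile. -/
noncomputable def homAvg {n : ℕ} (q : Fin n → ℝ) (d : Fin n → Fin n) : ℝ :=
  (∑ i, homAcc q d i) / n

/-!
Agent `0` is a sink whose accuracy `1/2 + 2ε` barely beats a coin flip; every other agent is
an expert of accuracy `1`, but voting costs her `1/2 - ε`, so inheriting agent `0`'s accuracy
pays her more than voting. Hence everybody delegating to agent `0` is an equilibrium. In any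
equilibrium no delegation chain ends in a cycle, because voting (worth at least `1/2 + ε`)
beats the coin flip a cycle yields; so every agent inherits the accuracy of a voter, which is
at least `1/2 + 2ε`. A planner instead lets agent `1` vote and all agents but `0` delegate to her.
-/

open Function

section HomogeneousGame

variable {n : ℕ}

theorem homAcc_eq_of_iterate_fixed (q : Fin n → ℝ) {d : Fin n → Fin n} {i : Fin n} {k : ℕ}
    (hk : d (d^[k] i) = d^[k] i) : homAcc q d i = q (d^[k] i) := by
  have h : ∃ k, d (d^[k] i) = d^[k] i := ⟨k, hk⟩
  obtain ⟨m, rfl⟩ := Nat.exists_eq_add_of_le (Nat.find_min' h hk)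
  rw [homAcc, dif_pos h, add_comm, iterate_add_apply, iterate_fixed (Nat.find_spec h)]

theorem homAcc_of_fixed (q : Fin n → ℝ) {d : Fin n → Fin n} {i : Fin n} (hi : d i = i) :
    homAcc q d i = q i :=
  homAcc_eq_of_iterate_fixed q (k := 0) hi

theorem homAcc_of_map_fixed (q : Fin n → ℝ) {d : Fin n → Fin n} {i : Fin n}
    (hi : d (d i) = d i) : homAcc q d i = q (d i) :=
  homAcc_eq_of_iterate_fixed q (k := 1) hi

theorem homAcc_update_const (q : Fin n → ℝ) {a i j : Fin n} (hia : i ≠ a) (hji : j ≠ i) :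
    homAcc q (update (fun _ => a) i j) i = q a := by
  have h2 : (update (fun _ => a) i j)^[2] i = a := by simp [hji]
  have := homAcc_eq_of_iterate_fixed q (k := 2) (by rw [h2]; simp [hia.symm])
  rwa [h2] at this

theorem homAcc_eq_half_or_exists_fixed (q : Fin n → ℝ) (d : Fin n → Fin n) (i : Fin n) :
    homAcc q d i = 1/2 ∨ ∃ a, d a = a ∧ homAcc q d i = q a := by
  by_cases h : ∃ k, d (d^[k] i) = d^[k] i
  · obtain ⟨k, hk⟩ := h
    exact Or.inr ⟨_, hk, homAcc_eq_of_iterate_fixed q hk⟩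
  · exact Or.inl (by rw [homAcc, dif_neg h])

theorem homUtil_update_self (q e : Fin n → ℝ) (d : Fin n → Fin n) (i : Fin n) :
    homUtil q e (update d i i) i = q i - e i := by
  simp [homUtil]

theorem homAvg_eq_of_forall [NeZero n] {q : Fin n → ℝ} {d : Fin n → Fin n} {c : ℝ}
    (h : ∀ i, homAcc q d i = c) : homAvg q d = c := by
  simp [homAvg, h, NeZero.ne n]

theorem le_homAvg_of_forall [NeZero n] {q : Fin n → ℝ} {d : Fin n → Fin n} {c : ℝ}
    (h : ∀ i, c ≤ homAcc q d i) : c ≤ homAvg q d := by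
  rw [homAvg, le_div_iff₀ (Nat.cast_pos.2 (NeZero.pos n))]
  calc c * n = ∑ _i : Fin n, c := by simp [mul_comm]
    _ ≤ _ := Finset.sum_le_sum fun i _ => h i

def IsHomNash (R : Fin n → Fin n → Prop) (q e : Fin n → ℝ) (d : Fin n → Fin n) : Prop :=
  (∀ i, d i = i ∨ R i (d i)) ∧
    ∀ i j, (j = i ∨ R i j) → homUtil q e (update d i j) i ≤ homUtil q e d i

theorem IsHomNash.sub_le_homUtil {R : Fin n → Fin n → Prop} {q e : Fin n → ℝ}
    {d : Fin n → Fin n} (h : IsHomNash R q e d) (i : Fin n) : q i - e i ≤ homUtil q e d i :=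
  homUtil_update_self q e d i ▸ h.2 i i (Or.inl rfl)

theorem IsHomNash.exists_fixed_homAcc_eq {R : Fin n → Fin n → Prop} {q e : Fin n → ℝ}
    {d : Fin n → Fin n} (h : IsHomNash R q e d) (he : ∀ i, 0 ≤ e i)
    (hqe : ∀ i, 1/2 < q i - e i) (i : Fin n) : ∃ a, d a = a ∧ homAcc q d i = q a := by
  refine (homAcc_eq_half_or_exists_fixed q d i).resolve_left fun hhalf => ?_
  have hmoves : d i ≠ i := fun hi => by
    linarith [homAcc_of_fixed q hi, he i, hqe i]
  have := h.sub_le_homUtil i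
  rw [homUtil, if_neg hmoves, hhalf] at this
  linarith [hqe i]

end HomogeneousGame

section SinkGame

variable {n : ℕ} [NeZero n]

def sinkNetwork : Fin n → Fin n → Prop := fun i _ => i ≠ 0

noncomputable def sinkAccuracy (ε : ℝ) : Fin n → ℝ := fun i => if i = 0 then 1/2 + 2 * ε else 1

noncomputable def sinkEffort (ε : ℝ) : Fin n → ℝ := fun i => if i = 0 then 0 else 1/2 - ε

variable {ε : ℝ}

theorem sinkAccuracy_le_one (hε : ε < 1/4) (i : Fin n) : sinkAccuracy ε i ≤ 1 := by
  unfold sinkAccuracy; split_ifs <;> linarith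

theorem le_sinkAccuracy (hε : ε < 1/4) (i : Fin n) : 1/2 + 2 * ε ≤ sinkAccuracy ε i := by
  unfold sinkAccuracy; split_ifs <;> linarith

theorem sinkEffort_nonneg (hε : ε < 1/4) (i : Fin n) : 0 ≤ sinkEffort ε i := by
  unfold sinkEffort; split_ifs <;> linarith

theorem half_lt_sinkAccuracy_sub_sinkEffort (hε : 0 < ε) (i : Fin n) :
    1/2 < sinkAccuracy ε i - sinkEffort ε i := by
  unfold sinkAccuracy sinkEffort; split_ifs <;> linarith

theorem homAvg_sinkAccuracy_const_zero :
    homAvg (sinkAccuracy ε) (fun _ : Fin n => 0) = 1/2 + 2 * ε :=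
  homAvg_eq_of_forall fun _ => by simp [homAcc_of_map_fixed, sinkAccuracy]

theorem isHomNash_sink_const_zero (hε : 0 ≤ ε) :
    IsHomNash sinkNetwork (sinkAccuracy ε) (sinkEffort ε) (fun _ : Fin n => 0) := by
  refine ⟨fun i => by by_cases hi : i = 0 <;> simp [sinkNetwork, hi], fun i j hj => ?_⟩
  have hutil : homUtil (sinkAccuracy ε) (sinkEffort ε) (fun _ => 0) i = 1/2 + 2 * ε := by
    by_cases hi : i = 0 <;>
      simp [homUtil, homAcc_of_map_fixed, sinkAccuracy, sinkEffort, hi, eq_comm (a := (0 : Fin n))]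
  rw [hutil]
  by_cases hji : j = i
  · subst hji
    rw [homUtil_update_self]
    unfold sinkAccuracy sinkEffort; split_ifs <;> linarith
  · have hi : i ≠ 0 := hj.resolve_left hji
    rw [homUtil, update_self, if_neg hji, homAcc_update_const _ hi hji]
    simp [sinkAccuracy]

theorem le_homAcc_of_isHomNash_sink (hε0 : 0 < ε) (hε1 : ε < 1/4)
    {d : Fin n → Fin n} (h : IsHomNash sinkNetwork (sinkAccuracy ε) (sinkEffort ε) d)
    (i : Fin n) : 1/2 + 2 * ε ≤ homAcc (sinkAccuracy ε) d i := by
  obtain ⟨a, -, ha⟩ := h.exists_fixed_homAcc_eq (sinkEffort_nonneg hε1)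
    (half_lt_sinkAccuracy_sub_sinkEffort hε0) i
  exact ha ▸ le_sinkAccuracy hε1 a

theorem homAvg_sinkAccuracy_vote_one (m : ℕ) :
    homAvg (sinkAccuracy ε) (fun i : Fin (m + 2) => if i = 0 then 0 else 1) =
      1 - (1/2 - 2 * ε) / ((m + 2 : ℕ) : ℝ) := by
  have hacc : ∀ i : Fin (m + 2), homAcc (sinkAccuracy ε)
      (fun i => if i = 0 then 0 else 1) i = sinkAccuracy ε i := fun i => by
    by_cases hi : i = 0 <;> simp [homAcc_of_map_fixed, sinkAccuracy, hi]
  rw [homAvg, Finset.sum_congr rfl fun i _ => hacc i, Fin.sum_univ_succ]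
  simp only [sinkAccuracy, Fin.succ_ne_zero, if_true, if_false, Finset.sum_const,
    Finset.card_univ, Fintype.card_fin]
  push_cast
  field_simp
  ring

end SinkGame

/-- For every `0 < ε < 1/4` and every `n ≥ 2` there is an `n`-player homogeneous delegation
game whose worst pure Nash equilibrium has average accuracy `1/2 + 2ε`, while some
delegation profile achieves average accuracy `1 - (1/2 - 2ε)/n`. -/
theorem delegation_game_poa_example (ε : ℝ) (hε0 : 0 < ε) (hε1 : ε < 1/4)
    (n : ℕ) (hn : 2 ≤ n) :
    ∃ (R : Fin n → Fin n → Prop) (q e : Fin n → ℝ),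
      (∀ i, q i ≤ 1) ∧ (∀ i, 0 ≤ e i) ∧ (∀ i, 1/2 ≤ q i - e i) ∧
      (∃ d : Fin n → Fin n,
        (∀ i, d i = i ∨ R i (d i)) ∧
        (∀ i j, (j = i ∨ R i j) →
          homUtil q e (Function.update d i j) i ≤ homUtil q e d i) ∧
        homAvg q d = 1/2 + 2 * ε) ∧
      (∀ d : Fin n → Fin n,
        (∀ i, d i = i ∨ R i (d i)) →
        (∀ i j, (j = i ∨ R i j) →
          homUtil q e (Function.update d i j) i ≤ homUtil q e d i) →
        1/2 + 2 * ε ≤ homAvg q d) ∧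
      (∃ d' : Fin n → Fin n,
        (∀ i, d' i = i ∨ R i (d' i)) ∧
        homAvg q d' = 1 - (1/2 - 2 * ε) / n) := by
  obtain ⟨m, rfl⟩ := Nat.exists_eq_add_of_le' hn
  refine ⟨sinkNetwork, sinkAccuracy ε, sinkEffort ε, sinkAccuracy_le_one hε1,
    sinkEffort_nonneg hε1, fun i => (half_lt_sinkAccuracy_sub_sinkEffort hε0 i).le, ?_, ?_, ?_⟩
  · obtain ⟨hfeasible, hstable⟩ := isHomNash_sink_const_zero (n := m + 2) hε0.le
    exact ⟨_, hfeasible, hstable, homAvg_sinkAccuracy_const_zero⟩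
  · exact fun d hfeasible hstable => le_homAvg_of_forall
      (le_homAcc_of_isHomNash_sink hε0 hε1 ⟨hfeasible, hstable⟩)
  · refine ⟨_, fun i => ?_, homAvg_sinkAccuracy_vote_one m⟩
    by_cases hi : i = 0 <;> simp [sinkNetwork, hi]
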